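/- Let N ≥ 1 and let ρ : ℝ → ℝ be measurable such that for every x ∈ ℝ, ∫ (1+|λ|)^{2N−2} |ρ(λ)| e^{λx} dλ < ∞. Then the function h(x) := ∫ ρ(λ) e^{λx} dλ is (2N−2)-times differentiable with h^{(j)}(x) = ∫ λ^j ρ(λ) e^{λx} dλ, and for every x ∈ ℝ: (1/N!) ∫_{ℝ^N} Δ(λ_1,…,λ_N)^2 ∏_{k=1}^N ρ(λ_k) e^{λ_k x} dλ = det( h^{(i+j−2)}(x) )_{i,j=1,…,N}. (This identifies the one-matrix model partition function with the Wronskian tau-function W_N[h, h′, …, h^{(N−1)}] of the generalized Burgers–Hopf hierarchy.) -/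

import Mathlib

/-!
Differentiation under the integral sign is dominated on the ball of radius 1 around `x` by
`(1 + |λ|)^(2N-2) |ρ(λ)| (e^{λ(x-1)} + e^{λ(x+1)})`, since `e^{λy}` is monotone in `y`; hence
`h^{(j)}(x)` is the moment `∫ λ^j ρ(λ) e^{λx} dλ` for `j ≤ 2N - 2`.

The determinant formula is Heine's identity, a case of Andréief's: `Δ(λ)² ∏ w(λ_k)` is
`det[λ_k^i] · det[λ_k^j w(λ_k)]`, and expanding both determinants over permutations `σ, τ`,
each term factorizes over the coordinates, so it integrates to `sgn σ sgn τ ∏_k c_{σ k, τ k}`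
with `c_{ij} = ∫ λ^{i+j} w(λ) dλ`. Summing over `τ` for fixed `σ` gives `det c`, so the total is
`N! det c`.
-/

open MeasureTheory

/-- The Vandermonde product `Δ(l₁,…,l_N) = ∏_{j<i} (l_i − l_j)`. -/
noncomputable def vdm {N : ℕ} (l : Fin N → ℝ) : ℝ :=
  ∏ i : Fin N, ∏ j ∈ Finset.Ioi i, (l j - l i)

theorem Matrix.sum_perm_sum_perm_sign_mul_prod {n R : Type*} [Fintype n] [DecidableEq n]
    [CommRing R] (c : Matrix n n R) :
    ∑ σ : Equiv.Perm n, ∑ τ : Equiv.Perm n,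
      ((Equiv.Perm.sign σ * Equiv.Perm.sign τ : ℤˣ) : R) * ∏ k, c (σ k) (τ k) =
      (Fintype.card n).factorial * c.det := by
  have inner (σ : Equiv.Perm n) : ∑ τ : Equiv.Perm n,
      ((Equiv.Perm.sign σ * Equiv.Perm.sign τ : ℤˣ) : R) * ∏ k, c (σ k) (τ k) = c.det := by
    rw [← c.det_transpose, det_apply']
    refine Fintype.sum_equiv (Equiv.mulRight σ⁻¹) _ _ fun τ => ?_
    rw [Equiv.coe_mulRight, ← Equiv.prod_comp σ (fun i => c.transpose ((τ * σ⁻¹) i) i)]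
    simp [Equiv.Perm.sign_mul, mul_comm]
  rw [Finset.sum_congr rfl fun σ _ => inner σ, Finset.sum_const, Finset.card_univ,
    Fintype.card_perm, nsmul_eq_mul]

theorem MeasureTheory.integral_det_mul_det_eq_factorial_mul_det {α n : Type*}
    [MeasurableSpace α] {μ : Measure α} [SigmaFinite μ] [Fintype n] [DecidableEq n]
    (f g : n → α → ℝ) (hfg : ∀ i j, Integrable (fun a => f i a * g j a) μ) :
    ∫ x : n → α, (Matrix.of fun k i => f i (x k)).det * (Matrix.of fun k j => g j (x k)).det
        ∂(Measure.pi fun _ => μ) =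
      ((Fintype.card n).factorial : ℝ) * (Matrix.of fun i j => ∫ a, f i a * g j a ∂μ).det := by
  have expand (x : n → α) :
      (Matrix.of fun k i => f i (x k)).det * (Matrix.of fun k j => g j (x k)).det =
        ∑ σ : Equiv.Perm n, ∑ τ : Equiv.Perm n,
          ((Equiv.Perm.sign σ * Equiv.Perm.sign τ : ℤˣ) : ℝ) *
            ∏ k, f (σ k) (x k) * g (τ k) (x k) := by
    rw [← Matrix.det_transpose, ← Matrix.det_transpose (Matrix.of _), Matrix.det_apply',
      Matrix.det_apply', Finset.sum_mul_sum]
    refine Finset.sum_congr rfl fun σ _ => Finset.sum_congr rfl fun τ _ => ?_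
    simp only [Matrix.transpose_apply, Matrix.of_apply, Finset.prod_mul_distrib,
      Units.val_mul, Int.cast_mul]
    ring
  have hterm (σ τ : Equiv.Perm n) :
      Integrable (fun x : n → α => ∏ k, f (σ k) (x k) * g (τ k) (x k)) (Measure.pi fun _ => μ) :=
    Integrable.fintype_prod (f := fun k a => f (σ k) a * g (τ k) a) fun k => hfg _ _
  simp_rw [expand]
  rw [integral_finsetSum _ fun σ _ => integrable_finsetSum _ fun τ _ => (hterm σ τ).const_mul _,
    ← Matrix.sum_perm_sum_perm_sign_mul_prod]
  refine Finset.sum_congr rfl fun σ _ => ?_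
  rw [integral_finsetSum _ fun τ _ => (hterm σ τ).const_mul _]
  refine Finset.sum_congr rfl fun τ _ => ?_
  rw [integral_const_mul, integral_fintype_prod_eq_prod (fun k a => f (σ k) a * g (τ k) a)]
  rfl

theorem integral_vdm_sq_mul_prod_eq_factorial_mul_det {N : ℕ} (w : ℝ → ℝ)
    (hw : ∀ i j : Fin N, Integrable fun l => l ^ ((i : ℕ) + j) * w l) :
    ∫ lam : Fin N → ℝ, vdm lam ^ 2 * ∏ k, w (lam k) =
      N.factorial * (Matrix.of fun i j : Fin N => ∫ l, l ^ ((i : ℕ) + j) * w l).det := by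
  have split (lam : Fin N → ℝ) : vdm lam ^ 2 * ∏ k, w (lam k) =
      (Matrix.of fun k (i : Fin N) => lam k ^ (i : ℕ)).det *
        (Matrix.of fun k (j : Fin N) => lam k ^ (j : ℕ) * w (lam k)).det := by
    have hscale := Matrix.det_mul_column (fun k => w (lam k)) (Matrix.vandermonde lam)
    simp only [Matrix.vandermonde_apply] at hscale
    simp_rw [mul_comm _ (w _), hscale, vdm, ← Matrix.det_vandermonde]
    rw [Matrix.vandermonde]
    ring
  simp_rw [split]
  rw [volume_pi, integral_det_mul_det_eq_factorial_mul_det (fun (i : Fin N) l => l ^ (i : ℕ))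
    (fun j l => l ^ (j : ℕ) * w l) fun i j => ?_, Fintype.card_fin]
  · simp_rw [← mul_assoc, ← pow_add]
  · simpa only [← mul_assoc, ← pow_add] using hw i j

noncomputable def expMoment (ρ : ℝ → ℝ) (j : ℕ) (x : ℝ) : ℝ :=
  ∫ l, l ^ j * ρ l * Real.exp (l * x)

theorem Real.exp_mul_le_of_mem_ball {l x y : ℝ} (hy : y ∈ Metric.ball x 1) :
    Real.exp (l * y) ≤ Real.exp (l * (x - 1)) + Real.exp (l * (x + 1)) := by
  rw [Metric.mem_ball, Real.dist_eq, abs_lt] at hy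
  rcases le_or_gt 0 l with hl | hl
  · calc Real.exp (l * y) ≤ Real.exp (l * (x + 1)) := Real.exp_le_exp.2 (by nlinarith)
      _ ≤ _ := le_add_of_nonneg_left (Real.exp_pos _).le
  · calc Real.exp (l * y) ≤ Real.exp (l * (x - 1)) := Real.exp_le_exp.2 (by nlinarith)
      _ ≤ _ := le_add_of_nonneg_right (Real.exp_pos _).le

section ExpMoment

variable {K m : ℕ} {ρ : ℝ → ℝ}

theorem norm_pow_mul_mul_exp_le (hm : m ≤ K) (l y : ℝ) :
    ‖l ^ m * ρ l * Real.exp (l * y)‖ ≤ (1 + |l|) ^ K * |ρ l| * Real.exp (l * y) := by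
  rw [Real.norm_eq_abs, abs_mul, abs_mul, abs_pow, Real.abs_exp]
  gcongr
  calc |l| ^ m ≤ (1 + |l|) ^ m := by gcongr; linarith
    _ ≤ (1 + |l|) ^ K := pow_le_pow_right₀ (by linarith [abs_nonneg l]) hm

theorem norm_pow_mul_mul_exp_le_of_mem_ball (hm : m ≤ K) {x y : ℝ} (hy : y ∈ Metric.ball x 1)
    (l : ℝ) : ‖l ^ m * ρ l * Real.exp (l * y)‖ ≤
      (1 + |l|) ^ K * |ρ l| * Real.exp (l * (x - 1)) +
        (1 + |l|) ^ K * |ρ l| * Real.exp (l * (x + 1)) := by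
  rw [← mul_add]
  exact (norm_pow_mul_mul_exp_le hm l y).trans
    (mul_le_mul_of_nonneg_left (Real.exp_mul_le_of_mem_ball hy) (by positivity))

variable (hρ : Measurable ρ)
  (hint : ∀ x : ℝ, Integrable fun l : ℝ => (1 + |l|) ^ K * |ρ l| * Real.exp (l * x))
include hρ hint

theorem integrable_pow_mul_mul_exp (hm : m ≤ K) (y : ℝ) :
    Integrable fun l => l ^ m * ρ l * Real.exp (l * y) := by
  refine (hint y).mono (by fun_prop) (.of_forall fun l => ?_)
  exact (norm_pow_mul_mul_exp_le hm l y).trans (Real.le_norm_self _)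

theorem hasDerivAt_expMoment {j : ℕ} (hj : j + 1 ≤ K) (x : ℝ) :
    HasDerivAt (expMoment ρ j) (expMoment ρ (j + 1) x) x := by
  refine (hasDerivAt_integral_of_dominated_loc_of_deriv_le
    (F := fun y l => l ^ j * ρ l * Real.exp (l * y))
    (F' := fun y l => l ^ (j + 1) * ρ l * Real.exp (l * y)) (Metric.ball_mem_nhds x one_pos)
    (.of_forall fun y => by fun_prop) (integrable_pow_mul_mul_exp hρ hint (by omega) x)
    (by fun_prop)
    (.of_forall fun l y hy => norm_pow_mul_mul_exp_le_of_mem_ball hj hy l)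
    ((hint (x - 1)).add (hint (x + 1))) (.of_forall fun l y _ => ?_)).2
  exact (((hasDerivAt_id y).const_mul l).exp.const_mul (l ^ j * ρ l)).congr_deriv
    (by simp only [id, mul_one]; ring)

theorem continuous_expMoment {j : ℕ} (hj : j ≤ K) : Continuous (expMoment ρ j) := by
  refine continuous_iff_continuousAt.2 fun x => continuousAt_of_dominated
    (F := fun y l => l ^ j * ρ l * Real.exp (l * y)) (.of_forall fun y => by fun_prop) ?_
    ((hint (x - 1)).add (hint (x + 1))) (.of_forall fun l => by fun_prop)
  filter_upwards [Metric.ball_mem_nhds x one_pos] with y hy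
  exact .of_forall fun l => norm_pow_mul_mul_exp_le_of_mem_ball hj hy l

theorem iteratedDeriv_expMoment_zero {j : ℕ} (hj : j ≤ K) :
    iteratedDeriv j (expMoment ρ 0) = expMoment ρ j := by
  induction j with
  | zero => exact iteratedDeriv_zero
  | succ j ih =>
    rw [iteratedDeriv_succ, ih (by omega)]
    exact funext fun x => (hasDerivAt_expMoment hρ hint hj x).deriv

theorem contDiff_expMoment_zero : ContDiff ℝ (K : ℕ∞) (expMoment ρ 0) := by
  refine contDiff_iff_iteratedDeriv.2 ⟨fun j hj => ?_, fun j hj => ?_⟩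
  · have hj : j ≤ K := by exact_mod_cast hj
    rw [iteratedDeriv_expMoment_zero hρ hint hj]
    exact continuous_expMoment hρ hint hj
  · have hj : j + 1 ≤ K := by exact_mod_cast hj
    rw [iteratedDeriv_expMoment_zero hρ hint (by omega)]
    exact fun x => (hasDerivAt_expMoment hρ hint hj x).differentiableAt

end ExpMoment

theorem stmt5_general (N : ℕ) (ρ : ℝ → ℝ) (hρ : Measurable ρ)
    (hint : ∀ x : ℝ, Integrable (fun l : ℝ =>
      (1 + |l|) ^ (2 * N - 2) * |ρ l| * Real.exp (l * x)))
    (h : ℝ → ℝ) (hdef : ∀ x, h x = ∫ l : ℝ, ρ l * Real.exp (l * x)) :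
    ContDiff ℝ ((2 * N - 2 : ℕ) : ℕ∞) h ∧
    (∀ j : ℕ, j ≤ 2 * N - 2 → ∀ x : ℝ,
      iteratedDeriv j h x = ∫ l : ℝ, l ^ j * ρ l * Real.exp (l * x)) ∧
    (∀ x : ℝ,
      (1 / (N.factorial : ℝ)) *
          ∫ lam : Fin N → ℝ,
            (vdm lam) ^ 2 * ∏ k : Fin N, (ρ (lam k) * Real.exp (lam k * x)) =
        Matrix.det (Matrix.of fun i j : Fin N =>
          iteratedDeriv ((i : ℕ) + (j : ℕ)) h x)) := by
  obtain rfl : h = expMoment ρ 0 := funext fun x => by simp [hdef, expMoment]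
  have hij (i j : Fin N) : (i : ℕ) + j ≤ 2 * N - 2 := by omega
  refine ⟨contDiff_expMoment_zero hρ hint,
    fun j hj x => by rw [iteratedDeriv_expMoment_zero hρ hint hj]; rfl, fun x => ?_⟩
  rw [integral_vdm_sq_mul_prod_eq_factorial_mul_det (fun l => ρ l * Real.exp (l * x))
    fun i j => ?_, ← mul_assoc,
    one_div_mul_cancel (by positivity), one_mul]
  · congr 1
    ext i j
    rw [Matrix.of_apply, Matrix.of_apply, iteratedDeriv_expMoment_zero hρ hint (hij i j),
      expMoment]
    simp only [mul_assoc]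
  · simpa only [mul_assoc] using integrable_pow_mul_mul_exp hρ hint (hij i j) x

theorem stmt5 (N : ℕ) (hN : 1 ≤ N) (ρ : ℝ → ℝ) (hρ : Measurable ρ)
    (hint : ∀ x : ℝ, Integrable (fun l : ℝ =>
      (1 + |l|) ^ (2 * N - 2) * |ρ l| * Real.exp (l * x)))
    (h : ℝ → ℝ) (hdef : ∀ x, h x = ∫ l : ℝ, ρ l * Real.exp (l * x)) :
    ContDiff ℝ ((2 * N - 2 : ℕ) : ℕ∞) h ∧
    (∀ j : ℕ, j ≤ 2 * N - 2 → ∀ x : ℝ,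
      iteratedDeriv j h x = ∫ l : ℝ, l ^ j * ρ l * Real.exp (l * x)) ∧
    (∀ x : ℝ,
      (1 / (N.factorial : ℝ)) *
          ∫ lam : Fin N → ℝ,
            (vdm lam) ^ 2 * ∏ k : Fin N, (ρ (lam k) * Real.exp (lam k * x)) =
        Matrix.det (Matrix.of fun i j : Fin N =>
          iteratedDeriv ((i : ℕ) + (j : ℕ)) h x)) :=
  stmt5_general N ρ hρ hint h hdef
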